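/- arXiv:2107.12426 — 7 statements merged into one kernel-verified Lean document; each statement's English description precedes it below -/
import Mathlib

section
/- In the group F₂ × ℤ = ⟨x,y⟩ × ⟨t⟩, the intersection of the subgroup H = ⟨x, y⟩ with the subgroup H' = ⟨xt, y⟩ equals the set of elements w(x,y)t⁰ where w ∈ F₂ has total x-exponent 0; equivalently, H ∩ H' is the normal closure of y in F₂ (viewed inside F₂ × ℤ). -/
/-- In `F₂ × ℤ`, with `x, y` free generators and `t` generating the `ℤ` factor,
the intersection of `H = ⟨x, y⟩` and `H' = ⟨xt, y⟩` equals the set of elements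
`(w, 1)` with `w` of total `x`-exponent `0`, which is the image under the
left inclusion of the normal closure of `y` in `F₂`. -/
theorem stmt0 :
    let F₂ := FreeGroup Bool
    let G := F₂ × Multiplicative ℤ
    let x : F₂ := FreeGroup.of true
    let y : F₂ := FreeGroup.of false
    let t : Multiplicative ℤ := Multiplicative.ofAdd 1
    let H : Subgroup G := Subgroup.closure {(x, 1), (y, 1)}
    let H' : Subgroup G := Subgroup.closure {(x, t), (y, 1)}
    let expX : F₂ →* Multiplicative ℤ :=
      FreeGroup.lift (fun b => if b then Multiplicative.ofAdd (1 : ℤ) else 1)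
    ((H ⊓ H' : Subgroup G) : Set G)
        = {g : G | ∃ w : F₂, expX w = 1 ∧ g = (w, 1)} ∧
      H ⊓ H' = Subgroup.map (MonoidHom.inl F₂ (Multiplicative ℤ))
        (Subgroup.normalClosure {y}) := by
  intro F₂ G x y t H H' expX
  have hex : expX x = t := by
    show FreeGroup.lift _ (FreeGroup.of true) = t
    rw [FreeGroup.lift_apply_of]; rfl
  have hey : expX y = 1 := by
    show FreeGroup.lift _ (FreeGroup.of false) = 1
    rw [FreeGroup.lift_apply_of]; rfl
  -- closure {x, y} = ⊤
  have htop : Subgroup.closure ({x, y} : Set F₂) = ⊤ := by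
    rw [eq_top_iff, ← FreeGroup.closure_range_of Bool]
    apply Subgroup.closure_mono
    rintro _ ⟨b, rfl⟩
    cases b
    · exact Or.inr rfl
    · exact Or.inl rfl
  -- membership in H
  have hH : ∀ g : G, g ∈ H ↔ ∃ w : F₂,
      ((w, (1 : Multiplicative ℤ)) : G) = g := by
    intro g
    have : H = Subgroup.map (MonoidHom.inl F₂ (Multiplicative ℤ))
        (Subgroup.closure ({x, y} : Set F₂)) := by
      rw [MonoidHom.map_closure]
      rw [Set.image_insert_eq, Set.image_singleton]
      rfl
    rw [this, htop]
    simp only [Subgroup.mem_map, Subgroup.mem_top, true_and]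
    exact exists_congr fun w => Iff.rfl
  -- membership in H'
  set φ : F₂ →* G := (MonoidHom.id F₂).prod expX with hφ
  have hH' : ∀ g : G, g ∈ H' ↔ ∃ w : F₂, ((w, expX w) : G) = g := by
    intro g
    have : H' = Subgroup.map φ (Subgroup.closure ({x, y} : Set F₂)) := by
      rw [MonoidHom.map_closure]
      rw [Set.image_insert_eq, Set.image_singleton]
      have h1 : φ x = (x, t) := by
        show ((x : F₂), expX x) = (x, t); rw [hex]
      have h2 : φ y = ((y : F₂), (1 : Multiplicative ℤ)) := by
        show ((y : F₂), expX y) = (y, 1); rw [hey]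
      rw [h1, h2]
    rw [this, htop]
    simp only [Subgroup.mem_map, Subgroup.mem_top, true_and]
    exact exists_congr fun w => Iff.rfl
  -- intersection membership
  have hmem : ∀ g : G, g ∈ H ⊓ H' ↔ ∃ w : F₂, expX w = 1 ∧ g = (w, 1) := by
    intro g
    rw [Subgroup.mem_inf, hH, hH']
    constructor
    · rintro ⟨⟨w, rfl⟩, ⟨v, hv⟩⟩
      have h1 : v = w := congrArg Prod.fst hv
      have h2 : expX v = 1 := congrArg Prod.snd hv
      exact ⟨w, h1 ▸ h2, rfl⟩
    · rintro ⟨w, hw, rfl⟩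
      exact ⟨⟨w, rfl⟩, ⟨w, by rw [hw]⟩⟩
  -- normal closure equals kernel
  have hN : Subgroup.normalClosure ({y} : Set F₂) = expX.ker := by
    apply le_antisymm
    · apply Subgroup.normalClosure_le_normal
      intro z hz
      rw [Set.mem_singleton_iff] at hz
      subst hz
      exact hey
    · intro w hw
      set N := Subgroup.normalClosure ({y} : Set F₂) with hNdef
      set σ : Multiplicative ℤ →* F₂ ⧸ N :=
        zpowersHom _ (QuotientGroup.mk' N x) with hσ
      have hcomp : σ.comp expX = QuotientGroup.mk' N := by
        apply FreeGroup.ext_hom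
        intro b
        cases b
        · show σ (expX y) = QuotientGroup.mk' N y
          rw [hey, map_one]
          symm
          rw [QuotientGroup.mk'_apply, QuotientGroup.eq_one_iff]
          exact Subgroup.subset_normalClosure rfl
        · show σ (expX x) = QuotientGroup.mk' N x
          rw [hex]
          show QuotientGroup.mk' N x ^ ((1 : ℤ)) = _
          rw [zpow_one]
      have := DFunLike.congr_fun hcomp w
      simp only [MonoidHom.comp_apply] at this
      rw [MonoidHom.mem_ker] at hw
      rw [hw, map_one] at this
      rw [QuotientGroup.mk'_apply] at this
      exact (QuotientGroup.eq_one_iff w).mp this.symm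
  refine ⟨?_, ?_⟩
  · ext g
    simp only [SetLike.mem_coe, Set.mem_setOf_eq]
    exact hmem g
  · ext g
    rw [hmem g, Subgroup.mem_map]
    constructor
    · rintro ⟨w, hw, rfl⟩
      exact ⟨w, by rw [hN, MonoidHom.mem_ker]; exact hw, rfl⟩
    · rintro ⟨w, hw, rfl⟩
      rw [hN, MonoidHom.mem_ker] at hw
      exact ⟨w, hw, rfl⟩
end

section
/- The group F₂ × ℤ does not satisfy the Howson property: there exist finitely generated subgroups H, H' of F₂ × ℤ whose intersection is not finitely generated. -/
/-!
Let `H = F₂ × 1` and let `H'` be the graph of a homomorphism `φ : F₂ → ℤ`; projecting to the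
first factor identifies `H ⊓ H'` with `ker φ`. Take for `φ` the exponent sum of `t`, read off
from the representation `a ↦ δ₀`, `t ↦ (shift by one)` of `F₂ = ⟨a, t⟩` in `ℤ ≀ ℤ`
(`a = of false`, `t = of true`). Since `tⁿ a t⁻ⁿ ↦ δₙ`, the kernel maps onto the base group
`ℤ^(ℤ)`, which is a free abelian group of infinite rank and hence not finitely generated.
-/

open SemidirectProduct Multiplicative

theorem Subgroup.FG.map {G G' : Type*} [Group G] [Group G'] {H : Subgroup G} (h : H.FG)
    (f : G →* G') : (H.map f).FG := by
  classical
  obtain ⟨S, rfl⟩ := h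
  exact ⟨S.image f, by rw [Finset.coe_image, MonoidHom.map_closure]⟩

theorem MonoidHom.map_fst_range_inl_inf_range_prod_id {G K : Type*} [Group G] [Group K]
    (f : G →* K) :
    ((inl G K).range ⊓ ((MonoidHom.id G).prod f).range).map (fst G K) = f.ker := by
  ext w
  constructor
  · rintro ⟨_, ⟨⟨u, rfl⟩, ⟨v, hv⟩⟩, rfl⟩
    simp only [prod_apply, id_apply, inl_apply, Prod.mk.injEq] at hv
    simp [← hv.1, hv.2]
  · intro hw
    exact ⟨(w, 1), ⟨⟨w, rfl⟩, ⟨w, by simp_all⟩⟩, rfl⟩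

theorem Finsupp.not_addGroup_fg {ι : Type*} [Infinite ι] : ¬ AddGroup.FG (ι →₀ ℤ) := by
  rw [← Module.Finite.iff_addGroup_fg]
  exact fun _ => (Module.Finite.finite_basis (Finsupp.basisSingleOne (R := ℤ) (ι := ι))).false

theorem Finsupp.closure_range_ofAdd_single_one (ι : Type*) :
    Subgroup.closure (Set.range fun i : ι => ofAdd (Finsupp.single i (1 : ℤ))) = ⊤ := by
  rw [eq_top_iff]
  rintro x -
  induction x using Multiplicative.rec with | ofAdd f => ?_
  induction f using Finsupp.induction_linear with
  | zero => exact one_mem _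
  | add f g hf hg => exact mul_mem hf hg
  | single i k =>
    rw [← Finsupp.smul_single_one, ofAdd_zsmul]
    exact zpow_mem (Subgroup.subset_closure (Set.mem_range_self i)) k

noncomputable def Finsupp.shift (ι R : Type*) [AddCommGroup ι] [AddCommMonoid R] :
    Multiplicative ι →* MulAut (Multiplicative (ι →₀ R)) where
  toFun m := AddEquiv.toMultiplicative (Finsupp.domCongr (Equiv.addRight m.toAdd))
  map_one' := by ext; simp [Equiv.Perm.one_def]
  map_mul' m n := by ext; simp [add_assoc, Equiv.Perm.mul_def, add_comm (-toAdd m)]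

@[simp]
theorem Finsupp.shift_ofAdd_single {ι R : Type*} [AddCommGroup ι] [AddCommMonoid R]
    (m : Multiplicative ι) (i : ι) (r : R) :
    Finsupp.shift ι R m (ofAdd (Finsupp.single i r)) = ofAdd (Finsupp.single (i + m.toAdd) r) := by
  simp [Finsupp.shift]

namespace SemidirectProduct

variable {N G : Type*} [Group N] [Group G] {φ : G →* MulAut N}

def leftOfKerRightHom : (rightHom : N ⋊[φ] G →* G).ker →* N where
  toFun x := x.1.left
  map_one' := rfl
  map_mul' x y := by
    have hx : x.1.right = 1 := x.2
    simp [hx]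

end SemidirectProduct

abbrev IntWrInt := Multiplicative (ℤ →₀ ℤ) ⋊[Finsupp.shift ℤ ℤ] Multiplicative ℤ

noncomputable def wreathRep : FreeGroup Bool →* IntWrInt :=
  FreeGroup.lift fun b => if b then inr (ofAdd 1) else inl (ofAdd (Finsupp.single 0 1))

theorem wreathRep_conj (n : ℤ) :
    wreathRep (FreeGroup.of true ^ n * FreeGroup.of false * (FreeGroup.of true ^ n)⁻¹) =
      inl (ofAdd (Finsupp.single n 1)) := by
  simp only [wreathRep, map_mul, map_inv, map_zpow, FreeGroup.lift_apply_of, if_true,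
    Bool.false_eq_true, if_false]
  rw [← map_zpow, ← map_inv, ← inl_aut, ← ofAdd_zsmul, zsmul_one]
  simp

theorem leftOfKerRightHom_comp_subgroupComap_wreathRep_surjective :
    Function.Surjective
      (leftOfKerRightHom.comp (wreathRep.subgroupComap (rightHom : IntWrInt →* _).ker)) := by
  rw [← MonoidHom.range_eq_top, eq_top_iff, ← Finsupp.closure_range_ofAdd_single_one,
    Subgroup.closure_le]
  rintro _ ⟨n, rfl⟩
  have hconj := wreathRep_conj n
  refine ⟨⟨_, show rightHom (wreathRep _) = 1 by rw [hconj]; simp⟩, ?_⟩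
  change (wreathRep _).left = _
  rw [hconj, left_inl]

theorem not_fg_ker_rightHom_comp_wreathRep : ¬ (rightHom.comp wreathRep).ker.FG := by
  rw [← MonoidHom.comap_ker, ← Group.fg_iff_subgroup_fg]
  intro hfg
  exact Finsupp.not_addGroup_fg (AddGroup.fg_iff_mul_fg.2
    (Group.fg_of_surjective leftOfKerRightHom_comp_subgroupComap_wreathRep_surjective))

/-- `F₂ × ℤ` does not satisfy the Howson property: there are finitely generated
subgroups `H, H'` whose intersection is not finitely generated. -/
theorem stmt2 :
    ∃ H H' : Subgroup (FreeGroup Bool × Multiplicative ℤ),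
      H.FG ∧ H'.FG ∧ ¬ (H ⊓ H').FG := by
  let f : FreeGroup Bool →* Multiplicative ℤ := rightHom.comp wreathRep
  refine ⟨(MonoidHom.inl _ _).range, ((MonoidHom.id _).prod f).range,
    (Group.fg_iff_subgroup_fg _).1 inferInstance, (Group.fg_iff_subgroup_fg _).1 inferInstance,
    fun hfg => not_fg_ker_rightHom_comp_wreathRep ?_⟩
  rw [← MonoidHom.map_fst_range_inl_inf_range_prod_id]
  exact hfg.map _
end

section
/- Let M, M' be subgroups of a free group F in free factor position, i.e., ⟨M, M'⟩ = M * M' (internal free product). If H₁, H₂ ≤ M and H₁', H₂' ≤ M', then ⟨H₁, H₁'⟩ ∩ ⟨H₂, H₂'⟩ = ⟨H₁ ∩ H₂, H₁' ∩ H₂'⟩. -/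
/-!
An element of a free product lies in the subgroup generated by subgroups `K i` of the factors
iff every letter of its reduced word lies in the corresponding `K i`. This condition for
`K₁ i ⊓ K₂ i` is the conjunction of the conditions for `K₁` and `K₂`, and free factor
position means that the free product embeds into `F`, which transports the identity there.
-/

open Monoid

namespace Monoid.CoprodI

variable {ι : Type*} {G : ι → Type*} [∀ i, Group (G i)]

namespace Word

variable [DecidableEq ι] [∀ i, DecidableEq (G i)]

theorem equiv_mul (x y : CoprodI G) : equiv (x * y) = x • equiv y :=
  mul_smul x y (empty : Word G)

theorem forall_mem_toList_of_smul {K : ∀ i, Subgroup (G i)} {j : ι} {m : G j} (hm : m ∈ K j)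
    {w : Word G} (hw : ∀ l ∈ w.toList, l.2 ∈ K l.1) :
    ∀ l ∈ (of m • w).toList, l.2 ∈ K l.1 := by
  rintro ⟨i, m₁⟩ hl
  rw [mem_smul_iff] at hl
  rcases hl with ⟨-, h⟩ | ⟨-, rfl, h | ⟨m', hm', rfl⟩ | ⟨-, rfl⟩⟩
  · exact hw _ h
  · exact hw _ (List.mem_of_mem_tail h)
  · exact mul_mem hm (hw _ (List.mem_of_mem_head? hm'))
  · exact hm

end Word

theorem iSup_map_of_eq_range_lift (K : ∀ i, Subgroup (G i)) :
    ⨆ i, (K i).map (of : G i →* CoprodI G) = (lift fun i ↦ of.comp (K i).subtype).range := by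
  simp only [range_eq_iSup, MonoidHom.range_comp, Subgroup.range_subtype]

theorem mem_iSup_map_of_iff [DecidableEq ι] [∀ i, DecidableEq (G i)]
    (K : ∀ i, Subgroup (G i)) (x : CoprodI G) :
    x ∈ ⨆ i, (K i).map (of : G i →* CoprodI G) ↔
      ∀ l ∈ (Word.equiv x).toList, l.2 ∈ K l.1 := by
  constructor
  · rw [iSup_map_of_eq_range_lift]
    rintro ⟨y, rfl⟩
    induction y using induction_left with
    | one => simp [Word.equiv, Word.empty]
    | mul m y ih =>
      rw [map_mul, lift_of, Word.equiv_mul]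
      exact Word.forall_mem_toList_of_smul m.2 ih
  · intro h
    rw [← Word.equiv.symm_apply_apply x]
    refine Subgroup.list_prod_mem _ fun g hg ↦ ?_
    obtain ⟨l, hl, rfl⟩ := List.mem_map.mp hg
    exact Subgroup.mem_iSup_of_mem l.1 ⟨l.2, h l hl, rfl⟩

theorem iSup_map_of_inf_iSup_map_of (K₁ K₂ : ∀ i, Subgroup (G i)) :
    (⨆ i, (K₁ i).map (of : G i →* CoprodI G)) ⊓ (⨆ i, (K₂ i).map of) =
      ⨆ i, (K₁ i ⊓ K₂ i).map of := by
  classical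
  ext x
  simp only [Subgroup.mem_inf, mem_iSup_map_of_iff, ← forall_and]

end Monoid.CoprodI

namespace Subgroup

variable {G : Type*} [Group G]

theorem iSup_inf_iSup_of_injective_coprodI_lift {ι : Type*} (M : ι → Subgroup G)
    (hM : Function.Injective (CoprodI.lift fun i ↦ (M i).subtype))
    (H₁ H₂ : ι → Subgroup G) (h₁ : ∀ i, H₁ i ≤ M i) (h₂ : ∀ i, H₂ i ≤ M i) :
    (⨆ i, H₁ i) ⊓ (⨆ i, H₂ i) = ⨆ i, H₁ i ⊓ H₂ i := by
  set Φ := CoprodI.lift fun i ↦ (M i).subtype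
  have hΦ : ∀ (H : ι → Subgroup G), (∀ i, H i ≤ M i) →
      ⨆ i, H i = (⨆ i, ((H i).subgroupOf (M i)).map (CoprodI.of (M := fun j ↦ M j))).map Φ := by
    intro H hH
    simp only [map_iSup, map_map, Φ, CoprodI.lift_comp_of, map_subgroupOf_eq_of_le (hH _)]
  rw [hΦ H₁ h₁, hΦ H₂ h₂, hΦ _ fun i ↦ inf_le_left.trans (h₁ i), ← map_inf _ _ Φ hM,
    CoprodI.iSup_map_of_inf_iSup_map_of]
  simp only [subgroupOf, comap_inf]

/-- Reduced words exist in Mathlib only for `CoprodI`, so the binary free product is replaced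
by the one indexed by `Bool`. -/
theorem injective_coprodI_lift_cond (M M' : Subgroup G)
    (h : Function.Injective (Coprod.lift M.subtype M'.subtype)) :
    Function.Injective (CoprodI.lift fun b ↦ (cond b M M').subtype) := by
  let ψ : CoprodI (fun b ↦ ↥(cond b M M')) →* Coprod M M' :=
    CoprodI.lift fun | true => Coprod.inl | false => Coprod.inr
  let φ : Coprod M M' →* CoprodI (fun b ↦ ↥(cond b M M')) :=
    Coprod.lift (CoprodI.of (M := fun b ↦ ↥(cond b M M')) (i := true))
      (CoprodI.of (M := fun b ↦ ↥(cond b M M')) (i := false))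
  have hφψ : φ.comp ψ = .id _ := CoprodI.ext_hom _ _ fun
    | true => by ext; simp [φ, ψ]
    | false => by ext; simp [φ, ψ]
  have hlift : CoprodI.lift (fun b ↦ (cond b M M').subtype) =
      (Coprod.lift M.subtype M'.subtype).comp ψ :=
    CoprodI.ext_hom _ _ fun
    | true => by ext; simp [ψ]
    | false => by ext; simp [ψ]
  rw [hlift]
  exact h.comp (Function.LeftInverse.injective (g := φ) (DFunLike.congr_fun hφψ))

end Subgroup

/-- Let `M, M'` be subgroups of a free group `F` in free factor position, i.e., the
natural map from the (external) free product `M ∗ M'` to `F` is injective (so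
`⟨M, M'⟩ = M * M'` internally). If `H₁, H₂ ≤ M` and `H₁', H₂' ≤ M'`, then
`⟨H₁, H₁'⟩ ∩ ⟨H₂, H₂'⟩ = ⟨H₁ ∩ H₂, H₁' ∩ H₂'⟩`. -/
theorem stmt7 (α : Type*) (M M' : Subgroup (FreeGroup α))
    (hfree : Function.Injective (Monoid.Coprod.lift M.subtype M'.subtype))
    (H₁ H₂ H₁' H₂' : Subgroup (FreeGroup α))
    (h₁ : H₁ ≤ M) (h₂ : H₂ ≤ M) (h₁' : H₁' ≤ M') (h₂' : H₂' ≤ M') :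
    (H₁ ⊔ H₁') ⊓ (H₂ ⊔ H₂') = (H₁ ⊓ H₂) ⊔ (H₁' ⊓ H₂') := by
  have := Subgroup.iSup_inf_iSup_of_injective_coprodI_lift _
    (Subgroup.injective_coprodI_lift_cond M M' hfree) (fun b ↦ cond b H₁ H₁')
    (fun b ↦ cond b H₂ H₂') (Bool.forall_bool.mpr ⟨h₁', h₁⟩) (Bool.forall_bool.mpr ⟨h₂', h₂⟩)
  simpa only [iSup_bool_eq, cond_true, cond_false] using this
end

section
/- In the free group F₂ = ⟨x, y⟩, let M = ⟨x⁴, y⟩ and M' = ⟨xy, yx⟩, H₁ = ⟨x⁴y²⟩, H₂ = ⟨yx⁴y²⟩, H₁' = ⟨xy⟩, H₂' = ⟨yx⟩. Then the element y⁻²x⁻³yx⁴y² is a nontrivial element of ⟨H₁, H₁'⟩ ∩ ⟨H₂, H₂'⟩, while H₁ ∩ H₂ and H₁' ∩ H₂' are both trivial; hence ⟨H₁ ∩ H₂, H₁' ∩ H₂'⟩ ≠ ⟨H₁, H₁'⟩ ∩ ⟨H₂, H₂'⟩. -/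
/-!
Both intersections of cyclic subgroups are trivial because of homomorphisms out of `F₂`:
the exponent sums separate `x⁴y²` from `yx⁴y²`, while `xy` and `yx` have the same exponent sums
but are sent to the opposite rotations `r 1`, `r (-1)` of `D∞` when `x ↦ sr 0`, `y ↦ sr 1`.
On the other hand `g` is a conjugate of `xy` by `x⁴y²` and of `yx` by `yx⁴y²`, and it has
`x`-exponent sum `1`, so it is a nontrivial element of both joins.
-/

open Subgroup FreeGroup

theorem Subgroup.zpowers_inf_zpowers_eq_bot {G : Type*} [Group G] {a b : G}
    (h : ∀ m n : ℤ, a ^ m = b ^ n → m = 0) : zpowers a ⊓ zpowers b = ⊥ := by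
  refine eq_bot_iff.mpr fun z hz => ?_
  obtain ⟨⟨m, rfl⟩, ⟨n, hn⟩⟩ := mem_inf.mp hz
  rw [mem_bot, h m n hn.symm]
  exact zpow_zero a

theorem Subgroup.inv_mul_mul_mem_sup {G : Type*} [Group G] {H K : Subgroup G} {a c : G}
    (ha : a ∈ H) (hc : c ∈ K) : a⁻¹ * c * a ∈ H ⊔ K :=
  mul_mem (mul_mem (inv_mem (mem_sup_left ha)) (mem_sup_right hc)) (mem_sup_left ha)

namespace FreeGroup

variable {α : Type*} [DecidableEq α]

def exponentSum (a : α) : FreeGroup α →* Multiplicative ℤ :=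
  lift fun b => if b = a then Multiplicative.ofAdd 1 else 1

@[simp]
theorem exponentSum_of (a b : α) :
    exponentSum a (of b) = if b = a then Multiplicative.ofAdd 1 else 1 :=
  lift_apply_of

def toInfiniteDihedral : FreeGroup Bool →* DihedralGroup 0 :=
  lift fun b => if b then DihedralGroup.sr 0 else DihedralGroup.sr 1

theorem eq_zero_of_x4y2_zpow_eq_yx4y2_zpow (m n : ℤ)
    (h : (of true ^ 4 * of false ^ 2) ^ m = (of false * of true ^ 4 * of false ^ 2) ^ n) :
    m = 0 := by
  have hx := congrArg (Multiplicative.toAdd ∘ exponentSum true) h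
  have hy := congrArg (Multiplicative.toAdd ∘ exponentSum false) h
  simp [toAdd_zpow] at hx hy
  omega

theorem eq_zero_of_xy_zpow_eq_yx_zpow (m n : ℤ)
    (h : (of true * of false) ^ m = (of false * of true) ^ n) : m = 0 := by
  have hx := congrArg (Multiplicative.toAdd ∘ exponentSum true) h
  have hd := congrArg toInfiniteDihedral h
  simp [toAdd_zpow] at hx
  simp [toInfiniteDihedral, DihedralGroup.sr_mul_sr, DihedralGroup.r_zpow] at hd
  have hd' : m = -n := hd  -- `ZMod 0` is `ℤ`
  omega

end FreeGroup

/-- In `F₂ = ⟨x, y⟩` with `M = ⟨x⁴, y⟩`, `M' = ⟨xy, yx⟩`, `H₁ = ⟨x⁴y²⟩`,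
`H₂ = ⟨yx⁴y²⟩`, `H₁' = ⟨xy⟩`, `H₂' = ⟨yx⟩`, the element `y⁻²x⁻³yx⁴y²` is a
nontrivial element of `⟨H₁, H₁'⟩ ∩ ⟨H₂, H₂'⟩`, while `H₁ ∩ H₂` and `H₁' ∩ H₂'`
are trivial; hence `⟨H₁ ∩ H₂, H₁' ∩ H₂'⟩ ≠ ⟨H₁, H₁'⟩ ∩ ⟨H₂, H₂'⟩`. -/
theorem stmt8 :
    let x : FreeGroup Bool := FreeGroup.of true
    let y : FreeGroup Bool := FreeGroup.of false
    let H₁ : Subgroup (FreeGroup Bool) := Subgroup.closure {x ^ 4 * y ^ 2}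
    let H₂ : Subgroup (FreeGroup Bool) := Subgroup.closure {y * x ^ 4 * y ^ 2}
    let H₁' : Subgroup (FreeGroup Bool) := Subgroup.closure {x * y}
    let H₂' : Subgroup (FreeGroup Bool) := Subgroup.closure {y * x}
    let g : FreeGroup Bool := y⁻¹ ^ 2 * x⁻¹ ^ 3 * y * x ^ 4 * y ^ 2
    g ≠ 1 ∧ g ∈ (H₁ ⊔ H₁') ⊓ (H₂ ⊔ H₂') ∧
      H₁ ⊓ H₂ = ⊥ ∧ H₁' ⊓ H₂' = ⊥ ∧
      (H₁ ⊓ H₂) ⊔ (H₁' ⊓ H₂') ≠ (H₁ ⊔ H₁') ⊓ (H₂ ⊔ H₂') := by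
  intro x y H₁ H₂ H₁' H₂' g
  have hg : g ≠ 1 := fun h => by
    simpa [g, x, y, toAdd_zpow] using congrArg (Multiplicative.toAdd ∘ exponentSum true) h
  have hg_mem : g ∈ (H₁ ⊔ H₁') ⊓ (H₂ ⊔ H₂') := by
    have h₁ : g = (x ^ 4 * y ^ 2)⁻¹ * (x * y) * (x ^ 4 * y ^ 2) := by simp only [g]; group
    have h₂ : g = (y * x ^ 4 * y ^ 2)⁻¹ * (y * x) * (y * x ^ 4 * y ^ 2) := by
      simp only [g]; group
    exact ⟨h₁ ▸ inv_mul_mul_mem_sup (subset_closure rfl) (subset_closure rfl),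
      h₂ ▸ inv_mul_mul_mem_sup (subset_closure rfl) (subset_closure rfl)⟩
  have hH : H₁ ⊓ H₂ = ⊥ := by
    simp only [H₁, H₂, ← zpowers_eq_closure]
    exact zpowers_inf_zpowers_eq_bot eq_zero_of_x4y2_zpow_eq_yx4y2_zpow
  have hH' : H₁' ⊓ H₂' = ⊥ := by
    simp only [H₁', H₂', ← zpowers_eq_closure]
    exact zpowers_inf_zpowers_eq_bot eq_zero_of_xy_zpow_eq_yx_zpow
  refine ⟨hg, hg_mem, hH, hH', fun h => hg ?_⟩
  rw [hH, hH', sup_bot_eq] at h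
  exact mem_bot.mp (h ▸ hg_mem)
end

section
/- A collection {I₁, …, I_r} of subsets of [k] is independent (all 2^r possible unions are distinct) if and only if for every j ∈ {1,…,r}, the union of all Iᵢ with i ≠ j is strictly contained in I₁ ∪ ⋯ ∪ I_r. -/
/-- A family `I₁,…,I_r` of subsets of `[k]` is independent (the map
`S ↦ ⋃_{s∈S} I_s` is injective) iff for every `j`, the union of the `Iᵢ` with
`i ≠ j` is strictly contained in `I₁ ∪ ⋯ ∪ I_r`. -/
theorem stmt9 (k r : ℕ) (I : Fin r → Set (Fin k)) :
    (Function.Injective fun S : Set (Fin r) => ⋃ i ∈ S, I i) ↔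
      ∀ j : Fin r, (⋃ i ∈ {i : Fin r | i ≠ j}, I i) ⊂ ⋃ i : Fin r, I i := by
  constructor
  · intro hinj j
    refine ⟨by intro x hx; simp only [Set.mem_iUnion] at *; tauto, fun hle => ?_⟩
    have heq : (⋃ i ∈ {i : Fin r | i ≠ j}, I i) = ⋃ i ∈ (Set.univ : Set (Fin r)), I i := by
      apply Set.Subset.antisymm
      · intro x hx; simp only [Set.mem_iUnion] at *; tauto
      · intro x hx
        apply hle
        simp only [Set.mem_iUnion] at hx ⊢
        tauto
    have := hinj heq
    have : j ∈ {i : Fin r | i ≠ j} := this ▸ Set.mem_univ j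
    exact this rfl
  · intro h S T hST
    simp only [] at hST
    -- key: for each j, there's x ∈ I j with x ∉ I i for all i ≠ j
    have key : ∀ j : Fin r, ∃ x, x ∈ I j ∧ ∀ i, i ≠ j → x ∉ I i := by
      intro j
      obtain ⟨hsub, hne⟩ := h j
      have : ∃ x, x ∈ (⋃ i : Fin r, I i) ∧ x ∉ ⋃ i ∈ {i : Fin r | i ≠ j}, I i := by
        by_contra hc
        push_neg at hc
        exact hne fun x hx => hc x hx
      obtain ⟨x, hx1, hx2⟩ := this
      simp only [Set.mem_iUnion, not_exists, Set.mem_setOf_eq] at hx1 hx2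
      obtain ⟨i, hi⟩ := hx1
      rcases eq_or_ne i j with rfl | hij
      · exact ⟨x, hi, fun i' hi' hx' => hx2 i' hi' hx'⟩
      · exact absurd hi (hx2 i hij)
    ext j
    constructor
    · intro hjS
      obtain ⟨x, hxj, hx⟩ := key j
      have : x ∈ ⋃ i ∈ S, I i := Set.mem_biUnion hjS hxj
      rw [hST] at this
      simp only [Set.mem_iUnion] at this
      obtain ⟨i, hiT, hxi⟩ := this
      rcases eq_or_ne i j with rfl | hij
      · exact hiT
      · exact absurd hxi (hx i hij)
    · intro hjT
      obtain ⟨x, hxj, hx⟩ := key j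
      have : x ∈ ⋃ i ∈ T, I i := Set.mem_biUnion hjT hxj
      rw [← hST] at this
      simp only [Set.mem_iUnion] at this
      obtain ⟨i, hiS, hxi⟩ := this
      rcases eq_or_ne i j with rfl | hij
      · exact hiS
      · exact absurd hxi (hx i hij)
end

section
/- If K is a normal subgroup of a finitely generated free group F, then K is finitely generated if and only if K is trivial or K has finite index in F. -/
/-!
Let `K = ⟨S⟩` with every generator of length at most `L`. Every prefix `p` of the reduced word of
an element of `K` has a coset `K p` meeting the ball of radius `L`: the property passes to products
and inverses, because free reduction only deletes cancelling pairs `x x⁻¹`, which changes no coset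
of the surviving prefixes. If `K` had infinite index, some coset `K g` would miss that ball. But
with at least four letters we can choose `s` so that, for `1 ≠ u ∈ K`, the word `g s u s⁻¹ g⁻¹` is
reduced; it represents an element of `K` by normality and has `g` as a prefix.

In rank at most one the free group is cyclic, where every nontrivial subgroup has finite index.
-/

theorem IsCyclic.finiteIndex_of_ne_bot {G : Type*} [Group G] [IsCyclic G] {H : Subgroup G}
    (hH : H ≠ ⊥) : H.FiniteIndex := by
  obtain ⟨x, hx⟩ := IsCyclic.exists_generator (α := G)
  obtain ⟨h, hh, h1⟩ := H.bot_or_exists_ne_one.resolve_left hH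
  obtain ⟨m, rfl⟩ := hx h
  have hm : m ≠ 0 := by rintro rfl; exact h1 (zpow_zero x)
  have hfin : IsOfFinOrder (x : G ⧸ H) :=
    isOfFinOrder_iff_zpow_eq_one.mpr ⟨m, hm, (QuotientGroup.eq_one_iff _).mpr (by simpa using hh)⟩
  have hsub : (Set.univ : Set (G ⧸ H)) ⊆ Subgroup.zpowers (x : G ⧸ H) := by
    intro y _
    obtain ⟨y, rfl⟩ := QuotientGroup.mk_surjective y
    obtain ⟨k, rfl⟩ := hx y
    exact ⟨k, (QuotientGroup.mk_zpow H x k).symm⟩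
  have : Finite (G ⧸ H) := Set.finite_univ_iff.mp (hfin.finite_zpowers.subset hsub)
  exact Subgroup.finiteIndex_of_finite_quotient

namespace FreeGroup

variable {α : Type*}

section IsReduced

variable {W A B C : List (α × Bool)}

theorem IsReduced.invRev (h : IsReduced W) : IsReduced (invRev W) := by
  classical
  rw [isReduced_iff_reduce_eq] at h ⊢
  rw [reduce_invRev, h]

theorem IsReduced.append_append_invRev (h₁ : IsReduced (A ++ B))
    (h₂ : IsReduced (A ++ FreeGroup.invRev B)) (hB : B ≠ []) :
    IsReduced (A ++ B ++ FreeGroup.invRev A) := by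
  refine h₁.append_overlap ?_ hB
  simpa only [invRev_append, invRev_invRev] using h₂.invRev

theorem not_cancel_iff_ne {a b : α × Bool} : (a.1 = b.1 → a.2 = b.2) ↔ b ≠ (a.1, !a.2) := by
  obtain ⟨a₁, a₂⟩ := a
  obtain ⟨b₁, b₂⟩ := b
  cases a₂ <;> cases b₂ <;> simp [eq_comm]

theorem not_cancel_iff_ne' {a b : α × Bool} : (a.1 = b.1 → a.2 = b.2) ↔ a ≠ (b.1, !b.2) := by
  obtain ⟨a₁, a₂⟩ := a
  obtain ⟨b₁, b₂⟩ := b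
  cases a₂ <;> cases b₂ <;> simp [eq_comm]

theorem IsReduced.append_cons {s : α × Bool} (hA : IsReduced A) (hB : IsReduced B)
    (hAs : ∀ a ∈ A.getLast?, s ≠ (a.1, !a.2)) (hsB : ∀ b ∈ B.head?, s ≠ (b.1, !b.2)) :
    IsReduced (A ++ s :: B) := by
  refine List.isChain_append.mpr ⟨hA, List.isChain_cons.mpr ⟨?_, hB⟩, ?_⟩
  · exact fun b hb ↦ not_cancel_iff_ne'.mpr (hsB b hb)
  · rintro a ha _ ⟨⟩
    exact not_cancel_iff_ne.mpr (hAs a ha)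

theorem exists_isReduced_append_cons [Finite α] (hα : 2 ≤ Nat.card α) (hA : IsReduced A)
    (hB : IsReduced B) (hC : IsReduced C) :
    ∃ s, IsReduced (A ++ s :: B) ∧ IsReduced (A ++ s :: C) := by
  classical
  have := Fintype.ofFinite α
  let ends := A.getLast?.toList ++ B.head?.toList ++ C.head?.toList
  obtain ⟨s, -, hs⟩ : ∃ s ∈ Finset.univ, s ∉ (ends.map fun a ↦ (a.1, !a.2)).toFinset := by
    refine Finset.exists_mem_notMem_of_card_lt_card ?_
    calc _ ≤ ends.length := (List.toFinset_card_le _).trans (List.length_map _).le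
      _ < Finset.univ.card := by
        rw [Finset.card_univ, Fintype.card_prod, Fintype.card_bool, ← Nat.card_eq_fintype_card]
        have := Option.length_toList_le (o := A.getLast?)
        have := Option.length_toList_le (o := B.head?)
        have := Option.length_toList_le (o := C.head?)
        simp only [ends, List.length_append]
        omega
  have avoid : ∀ a ∈ ends, s ≠ (a.1, !a.2) := fun a ha h ↦
    hs (List.mem_toFinset.mpr (List.mem_map.mpr ⟨a, ha, h.symm⟩))
  have last : ∀ a ∈ A.getLast?, s ≠ (a.1, !a.2) := fun a ha ↦
    avoid a (by simp [ends, Option.mem_def.mp ha])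
  exact ⟨s, hA.append_cons hB last fun b hb ↦ avoid b (by simp [ends, Option.mem_def.mp hb]),
    hA.append_cons hC last fun b hb ↦ avoid b (by simp [ends, Option.mem_def.mp hb])⟩

end IsReduced

section PrefixCosets

variable [DecidableEq α] (H : Subgroup (FreeGroup α)) (L : ℕ)

def PrefixCosetsMeetBall (W : List (α × Bool)) : Prop :=
  ∀ p q, W = p ++ q → ∃ h ∈ H, norm (h * mk p) ≤ L

variable {H L} {W W' A : List (α × Bool)}

theorem prefixCosetsMeetBall_of_length_le (hW : W.length ≤ L) : PrefixCosetsMeetBall H L W := by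
  rintro p q rfl
  refine ⟨1, H.one_mem, ?_⟩
  calc norm (1 * mk p) ≤ p.length := by rw [one_mul]; exact norm_mk_le
    _ ≤ L := le_trans (by simp) hW

namespace PrefixCosetsMeetBall

theorem of_step (hW : PrefixCosetsMeetBall H L W) (h : Red.Step W W') :
    PrefixCosetsMeetBall H L W' := by
  cases h with | @not W₁ W₂ x b =>
  intro p q hpq
  rcases List.append_eq_append_iff.mp hpq.symm with ⟨c, rfl, rfl⟩ | ⟨c, rfl, rfl⟩
  · exact hW p (c ++ (x, b) :: (x, !b) :: W₂) (by simp)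
  · obtain ⟨h, hh, hle⟩ := hW (W₁ ++ (x, b) :: (x, !b) :: c) q (by simp)
    have hmk : mk (W₁ ++ (x, b) :: (x, !b) :: c) = mk (W₁ ++ c) := Quot.sound Red.Step.not
    exact ⟨h, hh, hmk ▸ hle⟩

theorem of_red (hW : PrefixCosetsMeetBall H L W) (h : Red W W') :
    PrefixCosetsMeetBall H L W' := by
  induction h with
  | refl => exact hW
  | tail _ hstep ih => exact ih.of_step hstep

theorem append (hA : PrefixCosetsMeetBall H L A) (hW : PrefixCosetsMeetBall H L W)
    (hAH : mk A ∈ H) : PrefixCosetsMeetBall H L (A ++ W) := by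
  intro p q hpq
  rcases List.append_eq_append_iff.mp hpq.symm with ⟨c, rfl, -⟩ | ⟨c, rfl, hcq⟩
  · exact hA p c rfl
  · obtain ⟨h, hh, hle⟩ := hW c q hcq
    refine ⟨h * (mk A)⁻¹, H.mul_mem hh (H.inv_mem hAH), ?_⟩
    rwa [← mul_mk, mul_assoc, inv_mul_cancel_left]

theorem invRev (hW : PrefixCosetsMeetBall H L W) (hWH : mk W ∈ H) :
    PrefixCosetsMeetBall H L (FreeGroup.invRev W) := by
  intro p q hpq
  have hW' : W = FreeGroup.invRev q ++ FreeGroup.invRev p := by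
    rw [← invRev_append, ← hpq, invRev_invRev]
  obtain ⟨h, hh, hle⟩ := hW _ _ hW'
  refine ⟨h * mk W, H.mul_mem hh hWH, ?_⟩
  have hmkW : mk W = mk (FreeGroup.invRev q) * (mk p)⁻¹ := by rw [hW', inv_mk, mul_mk]
  rwa [hmkW, mul_assoc, inv_mul_cancel_right]

end PrefixCosetsMeetBall

theorem prefixCosetsMeetBall_toWord_of_mem_closure {S : Set (FreeGroup α)}
    (hS : ∀ s ∈ S, norm s ≤ L) {w : FreeGroup α} (hw : w ∈ Subgroup.closure S) :
    PrefixCosetsMeetBall (Subgroup.closure S) L w.toWord := by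
  induction hw using Subgroup.closure_induction with
  | mem s hs => exact prefixCosetsMeetBall_of_length_le (hS s hs)
  | one => exact prefixCosetsMeetBall_of_length_le (by simp)
  | mul a b ha _ iha ihb =>
    rw [toWord_mul]
    exact (iha.append ihb (by rwa [mk_toWord])).of_red reduce.red
  | inv a ha iha =>
    rw [toWord_inv]
    exact iha.invRev (by rwa [mk_toWord])

end PrefixCosets

theorem finite_setOf_norm_le [DecidableEq α] [Finite α] (L : ℕ) :
    {w : FreeGroup α | norm w ≤ L}.Finite :=
  ((List.finite_length_le _ L).image mk).subset fun w hw ↦ ⟨w.toWord, hw, mk_toWord⟩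

theorem exists_forall_lt_norm_mul [DecidableEq α] [Finite α] {H : Subgroup (FreeGroup α)}
    (hH : ¬ H.FiniteIndex) (L : ℕ) : ∃ g, ∀ h ∈ H, L < norm (h * g) := by
  have : Infinite (FreeGroup α ⧸ H) :=
    Subgroup.index_eq_zero_iff_infinite.mp (by_contra fun h ↦ hH ⟨h⟩)
  obtain ⟨c, -, hc⟩ := Set.infinite_univ.exists_notMem_finite
    ((finite_setOf_norm_le L).image (QuotientGroup.mk (s := H)))
  obtain ⟨x, rfl⟩ := QuotientGroup.mk_surjective c
  refine ⟨x⁻¹, fun h hh ↦ not_le.mp fun hle ↦ hc ⟨x * h⁻¹, ?_, ?_⟩⟩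
  · change norm _ ≤ L
    rwa [← norm_inv_eq, mul_inv_rev, inv_inv]
  · exact QuotientGroup.eq.mpr (by simpa using H.inv_mem hh)

theorem _root_.Subgroup.Normal.finiteIndex_of_fg [Finite α] (hα : 2 ≤ Nat.card α)
    {K : Subgroup (FreeGroup α)} (hK : K.Normal) (hfg : K.FG) (hne : K ≠ ⊥) : K.FiniteIndex := by
  classical
  by_contra hinf
  obtain ⟨S, rfl⟩ := hfg
  obtain ⟨u, hu, hu1⟩ := (Subgroup.bot_or_exists_ne_one _).resolve_left hne
  obtain ⟨g, hg⟩ := exists_forall_lt_norm_mul hinf (S.sup norm)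
  obtain ⟨s, hs, hs'⟩ := exists_isReduced_append_cons hα (A := g.toWord) (B := u.toWord)
    (C := u⁻¹.toWord) isReduced_toWord isReduced_toWord isReduced_toWord
  rw [toWord_inv] at hs'
  obtain ⟨B, hB⟩ : ∃ B, B = g.toWord ++ [s] := ⟨_, rfl⟩
  have hW : IsReduced (B ++ u.toWord ++ invRev B) :=
    IsReduced.append_append_invRev (by simpa [hB] using hs) (by simpa [hB] using hs')
      (toWord_eq_nil_iff.not.mpr hu1)
  have hconj : mk B * u * (mk B)⁻¹ ∈ Subgroup.closure (S : Set (FreeGroup α)) :=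
    hK.conj_mem u hu _
  have hword : (mk B * u * (mk B)⁻¹).toWord = g.toWord ++ (s :: u.toWord ++ invRev B) := by
    have hmk : mk B * u * (mk B)⁻¹ = mk (B ++ u.toWord ++ invRev B) := by
      rw [inv_mk, ← mul_mk, ← mul_mk, mk_toWord]
    rw [hmk, toWord_mk, hW.reduce_eq, hB]
    simp
  obtain ⟨k, hk, hle⟩ :=
    prefixCosetsMeetBall_toWord_of_mem_closure (fun t ht ↦ Finset.le_sup ht) hconj _ _ hword
  rw [mk_toWord] at hle
  exact (hg k hk).not_ge hle

end FreeGroup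

/-- A normal subgroup `K` of a finitely generated free group is finitely
generated iff it is trivial or of finite index. -/
theorem stmt13 (n : ℕ) (K : Subgroup (FreeGroup (Fin n))) (hK : K.Normal) :
    K.FG ↔ K = ⊥ ∨ K.FiniteIndex := by
  refine ⟨fun hfg ↦ or_iff_not_imp_left.mpr fun hne ↦ ?_, ?_⟩
  · obtain rfl | rfl | hn : n = 0 ∨ n = 1 ∨ 2 ≤ n := by omega
    · exact IsCyclic.finiteIndex_of_ne_bot hne
    · exact IsCyclic.finiteIndex_of_ne_bot hne
    · exact hK.finiteIndex_of_fg (by simpa using hn) hfg hne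
  · rintro (rfl | hfi)
    · exact ⟨∅, by simp⟩
    · exact (Group.fg_iff_subgroup_fg K).mp (Subgroup.fg_of_index_ne_zero K)
end

section
/- Let H₁, H₂ be subgroups of Fₙ × ℤᵐ and π : Fₙ × ℤᵐ → Fₙ the projection. Then (H₁ ∩ H₂)π is a normal subgroup of H₁π ∩ H₂π. -/
/-- For subgroups `H₁, H₂ ≤ Fₙ × ℤᵐ` and `π` the projection to the free part,
`(H₁ ∩ H₂)π` is a normal subgroup of `H₁π ∩ H₂π`. -/
theorem stmt14 (n m : ℕ)
    (H₁ H₂ : Subgroup (FreeGroup (Fin n) × Multiplicative (Fin m → ℤ))) :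
    (((H₁ ⊓ H₂).map (MonoidHom.fst _ _)).subgroupOf
      ((H₁.map (MonoidHom.fst _ _)) ⊓ (H₂.map (MonoidHom.fst _ _)))).Normal := by
  constructor
  intro g hg x
  rw [Subgroup.mem_subgroupOf] at hg ⊢
  obtain ⟨u, hu, hug⟩ := hg
  obtain ⟨⟨a, ha, hax⟩, ⟨b, hb, hbx⟩⟩ := x.2
  simp only [MonoidHom.coe_fst] at hax hbx hug
  have key : a * u * a⁻¹ = b * u * b⁻¹ := by
    refine Prod.ext ?_ ?_
    · simp only [Prod.fst_mul, Prod.fst_inv]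
      rw [hax, hbx]
    · simp only [Prod.snd_mul, Prod.snd_inv]
      rw [mul_comm a.2 u.2, mul_comm b.2 u.2, mul_assoc, mul_assoc,
        mul_inv_cancel, mul_inv_cancel]
  refine ⟨a * u * a⁻¹, ⟨H₁.mul_mem (H₁.mul_mem ha hu.1) (H₁.inv_mem ha),
    key ▸ H₂.mul_mem (H₂.mul_mem hb hu.2) (H₂.inv_mem hb)⟩, ?_⟩
  simp [hax, hug]
end
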